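/- Let s ≥ 2 be an integer. Then there exists n₀ such that for all n ≥ n₀, ex_3(n, BM_{s+1} ∪ {F_7}) = ex_3(s, {F_6}) + C(s, 2)·(n−s), where F_7 is the Fano plane and F_6 is the 3-graph obtained from F_7 by deleting one vertex. -/

import Mathlib

open Finset

/-- `H` is an `r`-uniform hypergraph (an `r`-graph): every hyperedge has exactly `r` vertices. -/
def IsUniform {V : Type*} (r : ℕ) (H : Finset (Finset V)) : Prop :=
  ∀ e ∈ H, e.card = r

/-- `H` contains a Berge copy of the graph with edge set `F`: there are an injection `g`
of the vertices of `F` into the vertices of `H` and an injection `φ` of the edges of `F`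
into the hyperedges of `H` such that `g '' e ⊆ φ e` for every edge `e` of `F`. -/
def ContainsBerge {α V : Type*} [DecidableEq α] [DecidableEq V]
    (F : Finset (Finset α)) (H : Finset (Finset V)) : Prop :=
  ∃ (g : α → V) (φ : Finset α → Finset V),
    Function.Injective g ∧ Set.InjOn φ ↑F ∧
      (∀ e ∈ F, φ e ∈ H) ∧ ∀ e ∈ F, e.image g ⊆ φ e

/-- `H` contains a copy (a subhypergraph isomorphic to) of the hypergraph with
vertex set `A` and edge set `F`. -/
def ContainsCopy {α V : Type*} [DecidableEq α] [DecidableEq V]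
    (A : Finset α) (F : Finset (Finset α)) (H : Finset (Finset V)) : Prop :=
  ∃ g : α → V, Set.InjOn g ↑A ∧ ∀ e ∈ F, e.image g ∈ H

/-- The edge set of the matching `M_t` consisting of `t` pairwise disjoint edges. -/
def matchingHG (t : ℕ) : Finset (Finset (Fin t × Fin 2)) :=
  Finset.univ.image fun i : Fin t => ({(i, 0), (i, 1)} : Finset (Fin t × Fin 2))

/-- The Turán number: the maximum number of hyperedges in an `r`-graph on `n` vertices
satisfying the freeness predicate `Free`. -/
noncomputable def exr (n r : ℕ) (Free : Finset (Finset (Fin n)) → Prop) : ℕ :=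
  sSup {m | ∃ H : Finset (Finset (Fin n)), IsUniform r H ∧ Free H ∧ H.card = m}

/-- The Fano plane `F₇` (on vertices `0, …, 6`, corresponding to `1, …, 7`). -/
def fanoPlane : Finset (Finset (Fin 7)) :=
  {{0, 1, 2}, {0, 3, 4}, {1, 3, 5}, {2, 4, 5}, {0, 5, 6}, {1, 4, 6}, {2, 3, 6}}

/-- The `3`-graph `F₆` obtained from the Fano plane by deleting the vertex `7`. -/
def fanoMinus : Finset (Finset (Fin 6)) :=
  {{0, 1, 2}, {0, 3, 4}, {1, 3, 5}, {2, 4, 5}}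

/-! Let `D` be the set of vertices of degree at least `d = 4 ^ (s + 1) + s + 1`. Each vertex of
`D` can be matched greedily, through a fresh hyperedge, to a fresh vertex, so a Berge-`M_{s+1}`-free
`H` has `|D| ≤ s`; when `|D| = s`, a hyperedge with two vertices outside `D` would start such a
matching, so every hyperedge has at least two vertices in `D`. Then `H` consists of triples inside
`D` (at most `ex_3(s, F₆)` of them) and triples with exactly two vertices in `D` (at most
`C(s, 2)(n - s)`). If `D` spans an `F₆`, then for every vertex `w` outside `D` one of the three
triples through `w` that would complete it to a Fano plane is missing, and these `n - s` missing
triples pay for the at most `C(s, 3)` triples inside `D`. If `|D| < s`, the hyperedges with two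
vertices of low degree again contain a greedy Berge matching, so there are `O(s d)` of them, and
the remaining ones number at most `C(s - 1, 2) n`.

For the lower bound, take an extremal `F₆`-free `3`-graph on `s` vertices and add all triples
with exactly two vertices among them. Every hyperedge then has at most one vertex outside these
`s` vertices, so each edge of a Berge matching has an endpoint among them; and since any two points
of the Fano plane lie on a common line, a Fano plane would have at most one vertex outside, leaving
an `F₆` inside.
-/

lemma mem_matchingHG {t : ℕ} {f : Finset (Fin t × Fin 2)} :
    f ∈ matchingHG t ↔ ∃ i, {(i, 0), (i, 1)} = f := by
  simp [matchingHG]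

section Berge

variable {V : Type*}

/-- Each `m ∈ M` pairs an edge `m.1` of the matching with the hyperedge `m.2` representing it. -/
def IsBergeMatching (H : Finset (Finset V)) (M : Finset (Finset V × Finset V)) : Prop :=
  (∀ m ∈ M, #m.1 = 2 ∧ m.1 ⊆ m.2 ∧ m.2 ∈ H) ∧
    (M : Set (Finset V × Finset V)).Pairwise fun m m' => Disjoint m.1 m'.1 ∧ m.2 ≠ m'.2

namespace IsBergeMatching

variable {H S : Finset (Finset V)} {M : Finset (Finset V × Finset V)}

lemma empty (H : Finset (Finset V)) : IsBergeMatching H ∅ := by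
  simp [IsBergeMatching]

lemma mono (hM : IsBergeMatching S M) (hSH : S ⊆ H) : IsBergeMatching H M :=
  ⟨fun m hm => (hM.1 m hm).imp_right fun h => h.imp_right fun h => hSH h, hM.2⟩

variable {q e : Finset V}

lemma insert [DecidableEq V] (hM : IsBergeMatching H M) (hq : #q = 2) (hqe : q ⊆ e) (he : e ∈ H)
    (hfresh : ∀ m ∈ M, Disjoint q m.1 ∧ e ≠ m.2) : IsBergeMatching H (insert (q, e) M) := by
  refine ⟨?_, ?_⟩
  · simp only [mem_insert, forall_eq_or_imp]
    exact ⟨⟨hq, hqe, he⟩, hM.1⟩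
  · rw [coe_insert, Set.pairwise_insert]
    refine ⟨hM.2, fun m hm _ => ⟨hfresh m hm, ?_⟩⟩
    exact ⟨(hfresh m hm).1.symm, (hfresh m hm).2.symm⟩

lemma card_insert [DecidableEq V] (hq : #q = 2)
    (hfresh : ∀ m ∈ M, Disjoint q m.1 ∧ e ≠ m.2) :
    #(Insert.insert (q, e) M) = #M + 1 := by
  refine card_insert_of_notMem fun hmem => ?_
  have hq : q.Nonempty := card_pos.1 (by omega)
  exact hq.ne_empty (disjoint_self.1 (hfresh _ hmem).1)

lemma containsBerge [DecidableEq V] {t : ℕ} (hM : IsBergeMatching H M) (ht : t ≤ #M) :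
    ContainsBerge (matchingHG t) H := by
  let m : Fin t → Finset V × Finset V := fun i => M.equivFin.symm (Fin.castLE ht i)
  have hm_mem (i : Fin t) : m i ∈ M := (M.equivFin.symm _).2
  have hm_inj : Function.Injective m := fun i j hij =>
    Fin.castLE_injective ht (M.equivFin.symm.injective (Subtype.ext hij))
  let pt (i : Fin t) : Fin 2 ≃ (m i).1 := (equivFinOfCardEq (hM.1 _ (hm_mem i)).1).symm
  let edge (i : Fin t) : Finset (Fin t × Fin 2) := {(i, 0), (i, 1)}
  have hedge : Function.Injective edge := fun i j hij => by
    simpa [edge] using (Finset.ext_iff.1 hij (i, 0)).1 (by simp [edge])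
  set φ := Function.extend edge (fun i => (m i).2) fun _ => ∅
  have hφ (i : Fin t) : φ (edge i) = (m i).2 := hedge.extend_apply _ _ i
  refine ⟨fun x => pt x.1 x.2, φ, ?_, ?_, ?_, ?_⟩
  · rintro ⟨i, a⟩ ⟨j, b⟩ hab
    simp only at hab
    obtain rfl : i = j := by
      by_contra hij
      refine Finset.disjoint_left.1 (hM.2 (hm_mem i) (hm_mem j) (hm_inj.ne hij)).1
        (pt i a).2 ?_
      exact hab ▸ (pt j b).2
    exact congrArg _ ((pt i).injective (Subtype.ext hab))
  · intro f hf f' hf' hff'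
    obtain ⟨i, rfl⟩ := mem_matchingHG.1 hf
    obtain ⟨j, rfl⟩ := mem_matchingHG.1 hf'
    change φ (edge i) = φ (edge j) at hff'
    rw [hφ, hφ] at hff'
    by_contra hne
    exact (hM.2 (hm_mem i) (hm_mem j) (hm_inj.ne fun h => hne (h ▸ rfl))).2 hff'
  · rintro _ hf
    obtain ⟨i, rfl⟩ := mem_matchingHG.1 hf
    exact hφ i ▸ (hM.1 _ (hm_mem i)).2.2
  · rintro _ hf
    obtain ⟨i, rfl⟩ := mem_matchingHG.1 hf
    change (edge i).image _ ⊆ _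
    rw [hφ]
    refine (image_subset_iff.2 fun x hx => ?_).trans (hM.1 _ (hm_mem i)).2.1
    obtain rfl : x.1 = i := by
      simp only [edge, mem_insert, mem_singleton] at hx
      rcases hx with rfl | rfl <;> rfl
    exact (pt x.1 x.2).2

end IsBergeMatching

lemma le_card_of_containsBerge_matchingHG [DecidableEq V] {H : Finset (Finset V)} {D : Finset V}
    {t : ℕ} (hD : ∀ e ∈ H, #(e \ D) ≤ 1)
    (h : ContainsBerge (matchingHG t) H) : t ≤ #D := by
  obtain ⟨g, φ, hg, -, hφH, hgφ⟩ := h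
  have hpair (i : Fin t) : ∃ a, g (i, a) ∈ D := by
    by_contra! hout
    have hi := mem_matchingHG.2 ⟨i, rfl⟩
    have hsub : {g (i, 0), g (i, 1)} ⊆ φ {(i, 0), (i, 1)} \ D := by
      refine fun x hx => mem_sdiff.2 ⟨hgφ _ hi ?_, ?_⟩
      · simpa [image_insert] using hx
      · rcases mem_insert.1 hx with rfl | hx
        · exact hout 0
        · exact mem_singleton.1 hx ▸ hout 1
    have := (card_le_card hsub).trans (hD _ (hφH _ hi))
    rw [card_pair (hg.ne (by simp))] at this
    omega
  choose a ha using hpair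
  calc t = #(univ : Finset (Fin t)) := (card_fin t).symm
    _ ≤ #D := card_le_card_of_injOn (fun i => g (i, a i)) (fun i _ => ha i)
        fun i _ j _ hij => congrArg Prod.fst (hg hij)

end Berge

section Degree

variable {V : Type*} [DecidableEq V]

def degree (H : Finset (Finset V)) (v : V) : ℕ := #{e ∈ H | v ∈ e}

lemma degree_mono {S H : Finset (Finset V)} (hSH : S ⊆ H) (v : V) : degree S v ≤ degree H v :=
  card_le_card (filter_subset_filter _ hSH)

lemma exists_mem_notMem_not_subset_of_lt_degree {H E : Finset (Finset V)} {B : Finset V} {v : V}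
    (h : #E + 2 ^ #B < degree H v) : ∃ e ∈ H, v ∈ e ∧ e ∉ E ∧ ¬ e ⊆ B := by
  by_contra! hcon
  refine h.not_ge ?_
  calc degree H v ≤ #(E ∪ B.powerset) := card_le_card fun e he => by
        obtain ⟨heH, hve⟩ := mem_filter.1 he
        rw [mem_union, mem_powerset]
        exact or_iff_not_imp_left.2 (hcon e heH hve)
    _ ≤ #E + 2 ^ #B := (card_union_le _ _).trans_eq (by rw [card_powerset])

/-- Each vertex of `T` lies in too many hyperedges for all of them to be used up already or to lie
inside the vertices spent so far. -/
lemma exists_isBergeMatching_card_eq_add_of_le_degree {H : Finset (Finset V)} {d : ℕ}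
    (T : Finset V) (hT : ∀ v ∈ T, d ≤ degree H v) :
    ∀ M₀ : Finset (Finset V × Finset V), IsBergeMatching H M₀ →
      (∀ m ∈ M₀, Disjoint m.1 T) → 2 ^ (2 * (#M₀ + #T)) + #M₀ + #T ≤ d →
      ∃ M, IsBergeMatching H M ∧ #M = #M₀ + #T := by
  induction T using Finset.induction_on with
  | empty => exact fun M₀ hM₀ _ _ => ⟨M₀, hM₀, rfl⟩
  | insert v T hvT ih =>
    intro M₀ hM₀ hdisj hd
    rw [card_insert_of_notMem hvT] at hd
    set Spent := M₀.biUnion Prod.fst ∪ insert v T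
    have hSpent : #Spent ≤ 2 * #M₀ + (#T + 1) := by
      refine (card_union_le _ _).trans (add_le_add ?_ (card_insert_le _ _))
      rw [mul_comm]
      exact card_biUnion_le_card_mul _ _ _ fun m hm => (hM₀.1 m hm).1.le
    obtain ⟨e, heH, hve, heM₀, hSpente⟩ := exists_mem_notMem_not_subset_of_lt_degree
      (H := H) (E := M₀.image Prod.snd) (B := Spent) (v := v) (by
        have := Nat.pow_le_pow_right (show 0 < 2 by norm_num)
          (show #Spent ≤ 2 * (#M₀ + (#T + 1)) by omega)
        have := card_image_le (s := M₀) (f := Prod.snd)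
        have := hT v (mem_insert_self v T)
        omega)
    obtain ⟨x, hxe, hxSpent⟩ := not_subset.1 hSpente
    have hvx : v ≠ x := fun h => hxSpent (h ▸ mem_union_right _ (mem_insert_self v T))
    have hxT : x ∉ insert v T := fun h => hxSpent (mem_union_right _ h)
    have hfresh : ∀ m ∈ M₀, Disjoint {v, x} m.1 ∧ e ≠ m.2 := fun m hm => by
      refine ⟨disjoint_left.2 fun y hy hym => ?_,
        fun h => heM₀ (mem_image.2 ⟨m, hm, h.symm⟩)⟩
      rcases mem_insert.1 hy with rfl | hy
      · exact disjoint_left.1 (hdisj m hm) hym (mem_insert_self y T)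
      · exact hxSpent (mem_singleton.1 hy ▸ mem_union_left _ (mem_biUnion.2 ⟨m, hm, hym⟩))
    have hq : #({v, x} : Finset V) = 2 := card_pair hvx
    have hcard := IsBergeMatching.card_insert hq hfresh
    obtain ⟨M, hM, hMcard⟩ := ih (fun w hw => hT w (mem_insert_of_mem hw)) _
      (hM₀.insert hq (insert_subset hve (singleton_subset_iff.2 hxe)) heH hfresh)
      (by
        simp only [mem_insert, forall_eq_or_imp, disjoint_insert_left, disjoint_singleton_left]
        exact ⟨⟨hvT, fun h => hxT (mem_insert_of_mem h)⟩,
          fun m hm => (hdisj m hm).mono_right (subset_insert v T)⟩)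
      (by rw [hcard, add_right_comm #M₀, add_assoc #M₀]; omega)
    exact ⟨M, hM, by rw [hMcard, hcard, card_insert_of_notMem hvT]; ring⟩

lemma exists_isBergeMatching_of_mul_lt_card {d : ℕ} (t : ℕ) :
    ∀ S : Finset (Finset V),
      (∀ e ∈ S, ∃ a ∈ e, ∃ b ∈ e, a ≠ b ∧ degree S a < d ∧ degree S b < d) →
      t * (2 * d) < #S → ∃ M, IsBergeMatching S M ∧ #M = t := by
  induction t with
  | zero => exact fun S _ _ => ⟨∅, IsBergeMatching.empty S, rfl⟩
  | succ t ih =>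
    intro S hS hcard
    obtain ⟨e, heS⟩ := card_pos.1 ((Nat.zero_le _).trans_lt hcard)
    obtain ⟨a, hae, b, hbe, hab, ha, hb⟩ := hS e heS
    set S' := {f ∈ S | a ∉ f ∧ b ∉ f}
    have hS'S : S' ⊆ S := filter_subset _ _
    have hsplit : #S ≤ #S' + degree S a + degree S b :=
      calc #S ≤ #(S' ∪ {f ∈ S | a ∈ f} ∪ {f ∈ S | b ∈ f}) :=
            card_le_card fun f hf => by
              simp only [S', mem_union, mem_filter]
              tauto
        _ ≤ #(S' ∪ {f ∈ S | a ∈ f}) + degree S b := card_union_le _ _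
        _ ≤ #S' + degree S a + degree S b := by gcongr; exact card_union_le _ _
    obtain ⟨M, hM, hMcard⟩ := ih S'
      (fun f hf => by
        obtain ⟨a', ha', b', hb', hab', ha'd, hb'd⟩ := hS f (hS'S hf)
        exact ⟨a', ha', b', hb', hab', (degree_mono hS'S a').trans_lt ha'd,
          (degree_mono hS'S b').trans_lt hb'd⟩)
      (by rw [Nat.succ_mul] at hcard; omega)
    have hfresh : ∀ m ∈ M, Disjoint {a, b} m.1 ∧ e ≠ m.2 := fun m hm => by
      have hm2 := (mem_filter.1 (hM.1 m hm).2.2).2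
      refine ⟨?_, fun h : e = m.2 => hm2.1 (h ▸ hae)⟩
      simp only [disjoint_insert_left, disjoint_singleton_left]
      exact ⟨fun h => hm2.1 ((hM.1 m hm).2.1 h), fun h => hm2.2 ((hM.1 m hm).2.1 h)⟩
    refine ⟨_, (hM.mono hS'S).insert (card_pair hab)
      (insert_subset hae (singleton_subset_iff.2 hbe)) heS hfresh, ?_⟩
    rw [IsBergeMatching.card_insert (card_pair hab) hfresh, hMcard]

variable {H : Finset (Finset V)} {D : Finset V} {s d : ℕ}

lemma card_le_of_forall_le_degree (hB : ¬ ContainsBerge (matchingHG (s + 1)) H)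
    (hd : 2 ^ (2 * (s + 1)) + (s + 1) ≤ d) (hD : ∀ v ∈ D, d ≤ degree H v) : #D ≤ s := by
  by_contra! hlt
  obtain ⟨T, hTD, hT⟩ := exists_subset_card_eq (Nat.succ_le_of_lt hlt)
  obtain ⟨M, hM, hMcard⟩ := exists_isBergeMatching_card_eq_add_of_le_degree T
    (fun v hv => hD v (hTD hv)) ∅ (IsBergeMatching.empty H) (by simp) (by simpa [hT] using hd)
  exact hB (hM.containsBerge (by simp [hMcard, hT]))

lemma card_sdiff_le_one_of_forall_le_degree (hB : ¬ ContainsBerge (matchingHG (s + 1)) H)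
    (hd : 2 ^ (2 * (s + 1)) + (s + 1) ≤ d) (hD : ∀ v ∈ D, d ≤ degree H v) (hDs : #D = s) :
    ∀ e ∈ H, #(e \ D) ≤ 1 := by
  intro e he
  by_contra! h2
  obtain ⟨a, ha, b, hb, hab⟩ := one_lt_card.1 h2
  rw [mem_sdiff] at ha hb
  have hfresh :
      ∀ m ∈ (∅ : Finset (Finset V × Finset V)), Disjoint {a, b} m.1 ∧ e ≠ m.2 :=
    fun m hm => absurd hm (notMem_empty m)
  have hcard := IsBergeMatching.card_insert (card_pair hab) hfresh
  rw [card_empty, zero_add] at hcard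
  obtain ⟨M, hM, hMcard⟩ := exists_isBergeMatching_card_eq_add_of_le_degree D hD _
    ((IsBergeMatching.empty H).insert (card_pair hab)
      (insert_subset ha.1 (singleton_subset_iff.2 hb.1)) he hfresh)
    (by
      simp only [mem_insert, notMem_empty, or_false, forall_eq, disjoint_insert_left,
        disjoint_singleton_left]
      exact ⟨ha.2, hb.2⟩)
    (by rw [hcard, hDs, add_comm 1 s]; omega)
  exact hB (hM.containsBerge (by rw [hMcard, hcard, hDs, add_comm]))

lemma card_filter_one_lt_card_sdiff_le {t : ℕ} (hB : ¬ ContainsBerge (matchingHG t) H)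
    (hD : ∀ v ∉ D, degree H v < d) : #{e ∈ H | 1 < #(e \ D)} ≤ t * (2 * d) := by
  by_contra! hlt
  have hSH : {e ∈ H | 1 < #(e \ D)} ⊆ H := filter_subset _ _
  obtain ⟨M, hM, hMcard⟩ := exists_isBergeMatching_of_mul_lt_card t _ (fun e he => by
    obtain ⟨heH, he2⟩ := mem_filter.1 he
    obtain ⟨a, ha, b, hb, hab⟩ := one_lt_card.1 he2
    rw [mem_sdiff] at ha hb
    exact ⟨a, ha.1, b, hb.1, hab, (degree_mono hSH a).trans_lt (hD a ha.2),
      (degree_mono hSH b).trans_lt (hD b hb.2)⟩) hlt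
  exact hB ((hM.mono hSH).containsBerge hMcard.ge)

end Degree

section Cross

variable {V : Type*} [DecidableEq V]

lemma insert_inter_eq_and_sdiff_eq {p D : Finset V} {w : V} (hp : p ⊆ D) (hw : w ∉ D) :
    insert w p ∩ D = p ∧ insert w p \ D = {w} := by
  refine ⟨by rw [insert_inter_of_notMem hw, inter_eq_left.2 hp], ?_⟩
  rw [insert_sdiff_of_notMem _ hw, sdiff_eq_empty_iff_subset.2 hp]
  rfl

variable [Fintype V]

def crossEdges (D : Finset V) : Finset (Finset V) :=
  (D.powersetCard 2 ×ˢ Dᶜ).image fun q => insert q.2 q.1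

variable {D : Finset V} {e : Finset V}

lemma mem_crossEdges : e ∈ crossEdges D ↔ #(e ∩ D) = 2 ∧ #(e \ D) = 1 := by
  constructor
  · simp only [crossEdges, mem_image, mem_product, mem_powersetCard, mem_compl]
    rintro ⟨⟨p, w⟩, ⟨⟨hpD, hp⟩, hw⟩, rfl⟩
    obtain ⟨hinter, hsdiff⟩ := insert_inter_eq_and_sdiff_eq hpD hw
    rw [hinter, hsdiff, hp, card_singleton]
    exact ⟨rfl, rfl⟩
  · rintro ⟨hinter, hsdiff⟩
    obtain ⟨w, hw⟩ := card_eq_one.1 hsdiff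
    have hwD : w ∉ D := (mem_sdiff.1 (hw ▸ mem_singleton_self w)).2
    refine mem_image.2 ⟨(e ∩ D, w), ?_, ?_⟩
    · simp only [mem_product, mem_powersetCard, mem_compl]
      exact ⟨⟨inter_subset_right, hinter⟩, hwD⟩
    · rw [insert_eq, ← hw, sdiff_union_inter]

lemma insert_mem_crossEdges {p : Finset V} {w : V} (hp : p ⊆ D) (hp2 : #p = 2) (hw : w ∉ D) :
    insert w p ∈ crossEdges D := by
  obtain ⟨hinter, hsdiff⟩ := insert_inter_eq_and_sdiff_eq hp hw
  exact mem_crossEdges.2 ⟨by rw [hinter, hp2], by rw [hsdiff, card_singleton]⟩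

lemma card_eq_three_of_mem_crossEdges (he : e ∈ crossEdges D) : #e = 3 := by
  rw [← card_inter_add_card_sdiff e D, (mem_crossEdges.1 he).1, (mem_crossEdges.1 he).2]

lemma card_crossEdges (D : Finset V) : #(crossEdges D) = (#D).choose 2 * #Dᶜ := by
  rw [crossEdges, card_image_of_injOn, card_product, card_powersetCard]
  rintro ⟨p, w⟩ hpw ⟨p', w'⟩ hpw' heq
  simp only [coe_product, Set.mem_prod, mem_coe, mem_powersetCard, mem_compl] at hpw hpw'
  have h := insert_inter_eq_and_sdiff_eq hpw.1.1 hpw.2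
  have h' := insert_inter_eq_and_sdiff_eq hpw'.1.1 hpw'.2
  dsimp only at heq
  rw [heq] at h
  rw [← h.1, h'.1, ← singleton_inj.1 (h.2.symm.trans h'.2)]

/-- A triple of `crossEdges D` determines its vertex outside `D`. -/
lemma card_compl_le_card_crossEdges_sdiff {H : Finset (Finset V)}
    (h : ∀ w ∉ D, ∃ e ∈ crossEdges D \ H, w ∈ e) : #Dᶜ ≤ #(crossEdges D \ H) := by
  choose! f hf hwf using h
  refine card_le_card_of_injOn f (fun w hw => hf w (mem_compl.1 hw)) fun w hw w' hw' hww' => ?_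
  simp only [coe_compl, Set.mem_compl_iff, mem_coe] at hw hw'
  have hone := (mem_crossEdges.1 (mem_sdiff.1 (hf w hw)).1).2
  exact card_le_one.1 hone.le w (mem_sdiff.2 ⟨hwf w hw, hw⟩) w'
    (mem_sdiff.2 ⟨hww' ▸ hwf w' hw', hw'⟩)

lemma card_le_card_filter_subset_add_card_inter {H : Finset (Finset V)} (hH : IsUniform 3 H)
    (hD : ∀ e ∈ H, #(e \ D) ≤ 1) : #H ≤ #{e ∈ H | e ⊆ D} + #(crossEdges D ∩ H) := by
  refine (card_le_card fun e he => ?_).trans (card_union_le _ _)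
  rcases Nat.le_one_iff_eq_zero_or_eq_one.1 (hD e he) with h0 | h1
  · exact mem_union_left _ (mem_filter.2 ⟨he, sdiff_eq_empty_iff_subset.1 (card_eq_zero.1 h0)⟩)
  · refine mem_union_right _ (mem_inter.2 ⟨mem_crossEdges.2 ⟨?_, h1⟩, he⟩)
    have := card_inter_add_card_sdiff e D
    have := hH e he
    omega

lemma card_filter_card_sdiff_le_one_le (H : Finset (Finset V)) (hH : IsUniform 3 H)
    (D : Finset V) : #{e ∈ H | #(e \ D) ≤ 1} ≤ (#D).choose 2 * Fintype.card V := by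
  calc #{e ∈ H | #(e \ D) ≤ 1}
      ≤ #((D.powersetCard 2 ×ˢ univ).image fun q : Finset V × V => insert q.2 q.1) := by
        refine card_le_card fun e he => ?_
        obtain ⟨heH, he1⟩ := mem_filter.1 he
        have h3 := hH e heH
        obtain ⟨p, hp, hp2⟩ := exists_subset_card_eq (s := e ∩ D) (n := 2)
          (by have := card_inter_add_card_sdiff e D; omega)
        have hpe : p ⊆ e := hp.trans inter_subset_left
        obtain ⟨x, hx⟩ : (e \ p).Nonempty := by
          rw [← card_pos, card_sdiff_of_subset hpe]; omega
        obtain ⟨hxe, hxp⟩ := mem_sdiff.1 hx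
        refine mem_image.2 ⟨(p, x), by simp [hp.trans inter_subset_right, hp2], ?_⟩
        exact eq_of_subset_of_card_le (insert_subset hxe hpe)
          (by rw [card_insert_of_notMem hxp, hp2, h3])
    _ ≤ #(D.powersetCard 2 ×ˢ (univ : Finset V)) := card_image_le
    _ = (#D).choose 2 * Fintype.card V := by rw [card_product, card_powersetCard, card_univ]

end Cross

section Turan

variable {n r : ℕ} {Free : Finset (Finset (Fin n)) → Prop}

lemma bddAbove_exr_set (n r : ℕ) (Free : Finset (Finset (Fin n)) → Prop) :
    BddAbove {m | ∃ H : Finset (Finset (Fin n)), IsUniform r H ∧ Free H ∧ #H = m} :=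
  ⟨Fintype.card (Finset (Fin n)), by rintro _ ⟨H, -, -, rfl⟩; exact card_le_univ H⟩

lemma le_exr {H : Finset (Finset (Fin n))} (hH : IsUniform r H) (hF : Free H) :
    #H ≤ exr n r Free :=
  le_csSup (bddAbove_exr_set n r Free) ⟨H, hH, hF, rfl⟩

lemma exr_le {B : ℕ}
    (h : ∀ H : Finset (Finset (Fin n)), IsUniform r H → Free H → #H ≤ B) :
    exr n r Free ≤ B :=
  csSup_le' <| by rintro _ ⟨H, hH, hF, rfl⟩; exact h H hH hF

lemma exists_card_eq_exr (h : Free ∅) :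
    ∃ H : Finset (Finset (Fin n)), IsUniform r H ∧ Free H ∧ #H = exr n r Free := by
  have hne : {m | ∃ H : Finset (Finset (Fin n)), IsUniform r H ∧ Free H ∧ #H = m}.Nonempty :=
    ⟨0, ∅, fun _ he => absurd he (notMem_empty _), h, rfl⟩
  exact Nat.sSup_mem hne (bddAbove_exr_set n r Free)

end Turan

section Copy

variable {V α β : Type*}

def ContainsCopyWithin [DecidableEq V] (D : Finset V) (F : Finset (Finset β))
    (H : Finset (Finset V)) : Prop :=
  ∃ g : β → V, Function.Injective g ∧ (∀ b, g b ∈ D) ∧ ∀ e ∈ F, e.image g ∈ H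

lemma exists_embedding_map_univ_eq {D : Finset V} {s : ℕ} (hDs : #D = s) :
    ∃ ι : Fin s ↪ V, univ.map ι = D := by
  subst hDs
  exact ⟨D.equivFin.symm.toEmbedding.trans (Function.Embedding.subtype _), by
    rw [← map_map, map_univ_equiv, univ_eq_attach, attach_map_val]⟩

variable [DecidableEq V] [Fintype α]

lemma exists_map_eq_filter_subset (ι : α ↪ V) (H : Finset (Finset V)) :
    ∃ G : Finset (Finset α),
      G.map (mapEmbedding ι).toEmbedding = {e ∈ H | e ⊆ univ.map ι} := by
  obtain ⟨G, -, hG⟩ := subset_map_iff.1 (show {e ∈ H | e ⊆ univ.map ι} ⊆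
      univ.map (mapEmbedding ι).toEmbedding from fun e he => by
    obtain ⟨f, -, rfl⟩ := subset_map_iff.1 (mem_filter.1 he).2
    exact mem_map_of_mem _ (mem_univ f))
  exact ⟨G, hG.symm⟩

lemma containsCopy_univ_iff_containsCopyWithin [DecidableEq α] [Fintype β] [DecidableEq β]
    (ι : α ↪ V)
    {F : Finset (Finset β)} {G : Finset (Finset α)} {H : Finset (Finset V)}
    (hG : G.map (mapEmbedding ι).toEmbedding = {e ∈ H | e ⊆ univ.map ι}) :
    ContainsCopy univ F G ↔ ContainsCopyWithin (univ.map ι) F H := by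
  have himage (g : β → α) (e : Finset β) :
      e.image (ι ∘ g) = (mapEmbedding ι) (e.image g) := by
    rw [mapEmbedding_apply, map_eq_image, image_image]
  constructor
  · rintro ⟨g, hg, hgG⟩
    refine ⟨ι ∘ g, ι.injective.comp (Set.injOn_univ.1 (coe_univ (α := β) ▸ hg)),
      fun b => mem_map_of_mem _ (mem_univ _), fun e he => ?_⟩
    rw [himage]
    exact (mem_filter.1 (hG ▸ mem_map_of_mem _ (hgG e he))).1
  · rintro ⟨g, hg, hgD, hgH⟩
    choose g' _ hg' using fun b => mem_map.1 (hgD b)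
    obtain rfl : ι ∘ g' = g := funext hg'
    refine ⟨g', hg.of_comp.injOn, fun e he => ?_⟩
    have hmem : e.image (ι ∘ g') ∈ {e ∈ H | e ⊆ univ.map ι} :=
      mem_filter.2 ⟨hgH e he, image_subset_iff.2 fun b _ => hgD b⟩
    obtain ⟨f, hf, hfe⟩ := mem_map.1 (hG ▸ hmem)
    rw [himage] at hfe
    rwa [(mapEmbedding ι).injective hfe] at hf

lemma card_filter_subset_le_exr {s r : ℕ} [Fintype β] [DecidableEq β] {H : Finset (Finset V)}
    {D : Finset V} {F : Finset (Finset β)} (hH : IsUniform r H) (hDs : #D = s)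
    (hF : ¬ ContainsCopyWithin D F H) :
    #{e ∈ H | e ⊆ D} ≤ exr s r fun G => ¬ ContainsCopy univ F G := by
  obtain ⟨ι, rfl⟩ := exists_embedding_map_univ_eq hDs
  obtain ⟨G, hG⟩ := exists_map_eq_filter_subset ι H
  rw [← hG, card_map]
  refine le_exr (fun f hf => ?_)
    fun hcopy => hF ((containsCopy_univ_iff_containsCopyWithin ι hG).1 hcopy)
  have hmem := hG ▸ mem_map_of_mem (mapEmbedding ι).toEmbedding hf
  rw [← card_map ι]
  exact hH _ (mem_filter.1 hmem).1

end Copy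

section Fano

lemma fanoPlane_exists_mem_of_ne :
    ∀ u v : Fin 7, u ≠ v → ∃ e ∈ fanoPlane, u ∈ e ∧ v ∈ e := by
  decide

lemma exists_fanoMinus_embedding_avoiding (v : Fin 7) :
    ∃ f : Fin 6 → Fin 7, Function.Injective f ∧ (∀ i, f i ≠ v) ∧
      ∀ e ∈ fanoMinus, e.image f ∈ fanoPlane := by
  refine ⟨![![1, 3, 5, 6, 4, 2], ![0, 3, 4, 6, 5, 2], ![0, 3, 4, 5, 6, 1], ![0, 1, 2, 6, 5, 4],
    ![0, 1, 2, 5, 6, 3], ![0, 1, 2, 4, 3, 6], ![0, 1, 2, 3, 4, 5]] v, ?_⟩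
  revert v
  decide

variable {V : Type*} [DecidableEq V] {H : Finset (Finset V)}

lemma containsCopyWithin_fanoMinus_of_containsCopy_fanoPlane {D : Finset V}
    (h : ContainsCopy univ fanoPlane H) (hD : ∀ e ∈ H, #(e \ D) ≤ 1) :
    ContainsCopyWithin D fanoMinus H := by
  obtain ⟨g, hg, hgH⟩ := h
  replace hg : Function.Injective g := Set.injOn_univ.1 (coe_univ (α := Fin 7) ▸ hg)
  obtain ⟨v, hv⟩ : ∃ v, ∀ u ≠ v, g u ∈ D := by
    by_cases hall : ∀ u, g u ∈ D
    · exact ⟨0, fun u _ => hall u⟩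
    obtain ⟨v, hvD⟩ := not_forall.1 hall
    refine ⟨v, fun u huv => by_contra fun huD => ?_⟩
    obtain ⟨e, he, hue, hve⟩ := fanoPlane_exists_mem_of_ne u v huv
    have hsub : {g u, g v} ⊆ e.image g \ D := by
      simp only [insert_subset_iff, singleton_subset_iff, mem_sdiff]
      exact ⟨⟨mem_image_of_mem g hue, huD⟩, mem_image_of_mem g hve, hvD⟩
    have := (card_le_card hsub).trans (hD _ (hgH e he))
    rw [card_pair (hg.ne huv)] at this
    omega
  obtain ⟨f, hf, hfv, hfF⟩ := exists_fanoMinus_embedding_avoiding v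
  refine ⟨g ∘ f, hg.comp hf, fun i => hv _ (hfv i), fun e he => ?_⟩
  rw [← image_image]
  exact hgH _ (hfF e he)

lemma containsCopy_fanoPlane_of_fanoMinus {g : Fin 6 → V} (hg : Function.Injective g)
    (hgH : ∀ e ∈ fanoMinus, e.image g ∈ H) {w : V} (hw : w ∉ Set.range g)
    (h05 : insert w {g 0, g 5} ∈ H) (h14 : insert w {g 1, g 4} ∈ H)
    (h23 : insert w {g 2, g 3} ∈ H) : ContainsCopy univ fanoPlane H := by
  refine ⟨Fin.snoc g w, (Fin.snoc_injective_of_injective hg hw).injOn, ?_⟩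
  simp only [fanoMinus, fanoPlane, mem_insert, mem_singleton, forall_eq_or_imp, forall_eq,
    image_insert, image_singleton] at hgH ⊢
  refine ⟨hgH.1, hgH.2.1, hgH.2.2.1, hgH.2.2.2, ?_, ?_, ?_⟩ <;>
    [convert h05 using 1; convert h14 using 1; convert h23 using 1] <;>
    ext <;> simp [Fin.snoc] <;> tauto

lemma card_crossEdges_inter_add_card_compl_le [Fintype V] {D : Finset V}
    (hF7 : ¬ ContainsCopy univ fanoPlane H)
    (hF6 : ContainsCopyWithin D fanoMinus H) :
    #(crossEdges D ∩ H) + #Dᶜ ≤ #(crossEdges D) := by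
  obtain ⟨g, hg, hgD, hgH⟩ := hF6
  suffices h : #Dᶜ ≤ #(crossEdges D \ H) by
    have := card_inter_add_card_sdiff (crossEdges D) H
    omega
  refine card_compl_le_card_crossEdges_sdiff fun w hw => ?_
  by_contra! hcon
  have hmem {a b : Fin 6} (hab : a ≠ b) : insert w {g a, g b} ∈ H := by
    by_contra hnot
    have hcross := insert_mem_crossEdges (p := {g a, g b})
      (insert_subset (hgD a) (singleton_subset_iff.2 (hgD b))) (card_pair (hg.ne hab)) hw
    exact hcon _ (mem_sdiff.2 ⟨hcross, hnot⟩) (mem_insert_self _ _)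
  exact hF7 (containsCopy_fanoPlane_of_fanoMinus hg hgH (by rintro ⟨b, rfl⟩; exact hw (hgD b))
    (hmem (by decide)) (hmem (by decide)) (hmem (by decide)))

end Fano

section Extremal

variable {n s : ℕ} {H : Finset (Finset (Fin n))} {D : Finset (Fin n)}

lemma choose_two_mul_add_le {c : ℕ} {m : ℕ} (hs : 2 ≤ s) (hm : m < s)
    (hn : s + s.choose 2 * s + c ≤ n) : m.choose 2 * n + c ≤ s.choose 2 * (n - s) := by
  obtain ⟨k, rfl⟩ : ∃ k, s = k + 1 := ⟨s - 1, by omega⟩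
  have hchoose : (k + 1).choose 2 = k.choose 2 + k := by
    rw [Nat.choose_succ_succ, Nat.choose_one_right, add_comm]
  have hmk : m.choose 2 ≤ k.choose 2 := Nat.choose_le_choose 2 (by omega)
  obtain ⟨l, rfl⟩ : ∃ l, n = k + 1 + l := ⟨n - (k + 1), by omega⟩
  rw [Nat.add_sub_cancel_left, hchoose] at *
  nlinarith

lemma card_le_exr_add_of_card_sdiff_le_one (hn : s + s.choose 3 ≤ n) (hH : IsUniform 3 H)
    (hF7 : ¬ ContainsCopy univ fanoPlane H) (hD : ∀ e ∈ H, #(e \ D) ≤ 1) (hDs : #D = s) :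
    #H ≤ exr s 3 (fun G => ¬ ContainsCopy univ fanoMinus G) + s.choose 2 * (n - s) := by
  have hsplit := card_le_card_filter_subset_add_card_inter hH hD
  have hcross : #(crossEdges D) = s.choose 2 * (n - s) := by
    rw [card_crossEdges, card_compl, Fintype.card_fin, hDs]
  by_cases hF6 : ContainsCopyWithin D fanoMinus H
  · have hin : #{e ∈ H | e ⊆ D} ≤ s.choose 3 := by
      rw [← hDs, ← card_powersetCard]
      exact card_le_card fun e he => mem_powersetCard.2
        ⟨(mem_filter.1 he).2, hH e (mem_filter.1 he).1⟩
    have := card_crossEdges_inter_add_card_compl_le hF7 hF6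
    rw [card_compl, Fintype.card_fin, hDs] at this
    omega
  · have := card_filter_subset_le_exr hH hDs hF6
    have := card_le_card (inter_subset_left (s₁ := crossEdges D) (s₂ := H))
    omega

lemma card_le_of_degree_lt_of_card_lt {d : ℕ} (hs : 2 ≤ s)
    (hn : s + s.choose 2 * s + (s + 1) * (2 * d) ≤ n)
    (hH : IsUniform 3 H) (hB : ¬ ContainsBerge (matchingHG (s + 1)) H)
    (hD : ∀ v ∉ D, degree H v < d) (hDs : #D < s) : #H ≤ s.choose 2 * (n - s) := by
  have hsplit := card_filter_add_card_filter_not (s := H) (fun e => #(e \ D) ≤ 1)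
  simp only [not_le] at hsplit
  have h1 := card_filter_card_sdiff_le_one_le H hH D
  have h2 := card_filter_one_lt_card_sdiff_le hB hD
  rw [Fintype.card_fin] at h1
  have := choose_two_mul_add_le hs hDs hn
  omega

end Extremal

lemma exists_not_containsBerge_not_containsCopy_card_eq {n s : ℕ} (hsn : s ≤ n)
    (G : Finset (Finset (Fin s))) (hG : IsUniform 3 G)
    (hGF : ¬ ContainsCopy univ fanoMinus G) :
    ∃ H : Finset (Finset (Fin n)), IsUniform 3 H ∧
      (¬ ContainsBerge (matchingHG (s + 1)) H ∧ ¬ ContainsCopy univ fanoPlane H) ∧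
      #H = #G + s.choose 2 * (n - s) := by
  set ι := Fin.castLEEmb hsn
  set D : Finset (Fin n) := univ.map ι
  set Gι := G.map (mapEmbedding ι).toEmbedding
  have hGιD : ∀ e ∈ Gι, e ⊆ D := fun e he => by
    obtain ⟨f, -, rfl⟩ := mem_map.1 he
    exact map_subset_map.2 (subset_univ f)
  have hcrossD : ∀ e ∈ crossEdges D, ¬ e ⊆ D := fun e he hsub => by
    simpa [sdiff_eq_empty_iff_subset.2 hsub] using (mem_crossEdges.1 he).2
  have hout : ∀ e ∈ Gι ∪ crossEdges D, #(e \ D) ≤ 1 := fun e he => by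
    rcases mem_union.1 he with he | he
    · simp [sdiff_eq_empty_iff_subset.2 (hGιD e he)]
    · exact (mem_crossEdges.1 he).2.le
  have hfilter : Gι = {e ∈ Gι ∪ crossEdges D | e ⊆ D} := by
    ext e
    simp only [mem_filter, mem_union]
    exact ⟨fun he => ⟨Or.inl he, hGιD e he⟩, fun ⟨he, hsub⟩ => he.resolve_right
      fun hc => hcrossD e hc hsub⟩
  have hDs : #D = s := by simp [D]
  refine ⟨Gι ∪ crossEdges D, fun e he => ?_, ⟨fun hB => ?_, fun hF => ?_⟩, ?_⟩
  · rcases mem_union.1 he with he | he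
    · obtain ⟨f, hf, rfl⟩ := mem_map.1 he
      simpa using hG f hf
    · exact card_eq_three_of_mem_crossEdges he
  · have := le_card_of_containsBerge_matchingHG hout hB
    omega
  · exact hGF ((containsCopy_univ_iff_containsCopyWithin ι hfilter).2
      (containsCopyWithin_fanoMinus_of_containsCopy_fanoPlane hF hout))
  · rw [card_union_of_disjoint (disjoint_left.2 fun e he hc => hcrossD e hc (hGιD e he)),
      card_map, card_crossEdges, card_compl, Fintype.card_fin, hDs]

lemma card_le_of_not_containsBerge_of_not_containsCopy {n s : ℕ} (hs : 2 ≤ s)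
    (hn : s + s.choose 3 + s.choose 2 * s + (s + 1) * (2 * (2 ^ (2 * (s + 1)) + (s + 1))) ≤ n)
    {H : Finset (Finset (Fin n))} (hH : IsUniform 3 H)
    (hB : ¬ ContainsBerge (matchingHG (s + 1)) H) (hF : ¬ ContainsCopy univ fanoPlane H) :
    #H ≤ exr s 3 (fun G => ¬ ContainsCopy univ fanoMinus G) + s.choose 2 * (n - s) := by
  set d := 2 ^ (2 * (s + 1)) + (s + 1)
  set D : Finset (Fin n) := {v | d ≤ degree H v}
  have hD (v : Fin n) : v ∈ D ↔ d ≤ degree H v := by simp [D]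
  rcases (card_le_of_forall_le_degree hB le_rfl fun v => (hD v).1).lt_or_eq with hlt | heq
  · exact (card_le_of_degree_lt_of_card_lt hs (by omega) hH hB
      (fun v hv => not_le.1 fun h => hv ((hD v).2 h)) hlt).trans (Nat.le_add_left _ _)
  · exact card_le_exr_add_of_card_sdiff_le_one (by omega) hH hF
      (card_sdiff_le_one_of_forall_le_degree hB le_rfl (fun v => (hD v).1) heq) heq

/-- Corollary: for `s ≥ 2` and all sufficiently large `n`,
`ex_3(n, BM_{s+1} ∪ {F₇}) = ex_3(s, {F₆}) + C(s, 2)(n-s)`. -/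
theorem exr_berge_matching_and_fano
    (s : ℕ) (hs : 2 ≤ s) :
    ∃ n₀ : ℕ, ∀ n : ℕ, n₀ ≤ n →
      exr n 3 (fun H => ¬ ContainsBerge (matchingHG (s + 1)) H ∧
          ¬ ContainsCopy Finset.univ fanoPlane H) =
        exr s 3 (fun H => ¬ ContainsCopy Finset.univ fanoMinus H) +
          Nat.choose s 2 * (n - s) := by
  refine ⟨s + s.choose 3 + s.choose 2 * s + (s + 1) * (2 * (2 ^ (2 * (s + 1)) + (s + 1))),
    fun n hn => le_antisymm ?_ ?_⟩
  · exact exr_le fun H hH hfree =>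
      card_le_of_not_containsBerge_of_not_containsCopy hs hn hH hfree.1 hfree.2
  · obtain ⟨G, hG, hGF, hGcard⟩ := exists_card_eq_exr (n := s) (r := 3)
      (Free := fun G => ¬ ContainsCopy univ fanoMinus G) fun ⟨_, _, h⟩ =>
        notMem_empty _ (h {0, 1, 2} (by decide))
    obtain ⟨H, hH, hHfree, hHcard⟩ :=
      exists_not_containsBerge_not_containsCopy_card_eq (n := n) (by omega) G hG hGF
    exact hGcard ▸ hHcard ▸ le_exr hH hHfree
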